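/- Every cubic tree (a tree with at least two vertices in which every internal node has degree 3) has a balanced edge, i.e., an edge e such that each of the two parts A_e, B_e of the induced partition of the leaf set L(T) satisfies |A_e| ≥ |L(T)|/3 and |B_e| ≥ |L(T)|/3. -/

import Mathlib

/-!
Deleting an edge `ab` of a tree splits its leaves into those on the side of `a` and those on
the side of `b`. Choose an edge minimising the larger of the two counts, say the side of `b`.
If the side of `a` held fewer than a third of the leaves, `b` could not be a leaf, so its two
other neighbours `c`, `d` split the side of `b`; if `c` carries the larger share, both sides of
`cb` are smaller than the side of `b`, contradicting minimality. This uses that each side of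
an edge of a finite forest contains a leaf.
-/

open SimpleGraph

/-- Sorted list of the tuple set `S^d`: tuples with entries in {1,3} except
the last entry which is in {1,2,3,4}, of length between 1 and `d`,
listed in lexicographic order. -/
def Tl : ℕ → List (List ℕ)
  | 0 => []
  | k+1 => [[1]] ++ (Tl k).map (fun a => 1 :: a) ++ [[2], [3]]
            ++ (Tl k).map (fun a => 3 :: a) ++ [[4]]

/-- Strict lexicographic order on tuples (a proper prefix is smaller). -/
def lexLt (a b : List ℕ) : Prop := List.Lex (· < ·) a b

def lexLe (a b : List ℕ) : Prop := a = b ∨ lexLt a b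

/-- `v` is the successor of `u` in the lexicographic order on `S^d`. -/
def IsSucc (d : ℕ) (u v : List ℕ) : Prop :=
  v ∈ Tl d ∧ lexLt u v ∧ ∀ w ∈ Tl d, lexLt u w → lexLe v w

/-- The interval `[a,b]` in `S^d`. -/
def interval (d : ℕ) (a b : List ℕ) : Set (List ℕ) :=
  {c | c ∈ Tl d ∧ lexLe a c ∧ lexLe c b}

/-- `[a,b]` is a proper interval: no interior element has length `l(a)` or `l(b)`. -/
def ProperInterval (d : ℕ) (a b : List ℕ) : Prop :=
  a ∈ Tl d ∧ b ∈ Tl d ∧ lexLe a b ∧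
  ∀ c ∈ interval d a b, c ≠ a → c ≠ b →
    c.length ≠ a.length ∧ c.length ≠ b.length

/-- The set of left endpoints of flat steps of the interval `[a,b]`. -/
def flatSteps (d : ℕ) (a b : List ℕ) : Set (List ℕ) :=
  {c | c ∈ Tl d ∧ lexLe a c ∧ lexLt c b ∧ ∃ v, IsSucc d c v ∧ v.length = c.length}

/-- Vertices of `G_d`: elements of `S^d`, subdivision vertices, and centers. -/
inductive Vtx where
  | elt : List ℕ → Vtx
  | sub : ℕ → Fin 2 → Vtx
  | ctr : ℕ → Vtx
deriving DecidableEq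

/-- The path `P_d` as a list of vertices: the elements of `S^d` in order,
with two subdivision vertices between consecutive elements of equal length
and one otherwise. -/
def pathList (d : ℕ) : List Vtx :=
  ((List.range (Tl d).length).zip (Tl d)).flatMap (fun p =>
    Vtx.elt p.2 :: (match (Tl d)[p.1 + 1]? with
      | none => []
      | some b =>
        if p.2.length = b.length then [Vtx.sub p.1 0, Vtx.sub p.1 1]
        else [Vtx.sub p.1 0]))

/-- `x` and `y` are consecutive in the list `l`. -/
def ChainAdj {α : Type} (l : List α) (x y : α) : Prop :=
  ∃ i, (l[i]? = some x ∧ l[i+1]? = some y) ∨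
       (l[i]? = some y ∧ l[i+1]? = some x)

/-- Adjacency from a center vertex. -/
def ctrAdj (d : ℕ) : Vtx → Vtx → Prop
  | Vtx.ctr k, Vtx.ctr m => k ≠ m ∧ 1 ≤ k ∧ k ≤ d ∧ 1 ≤ m ∧ m ≤ d
  | Vtx.ctr k, Vtx.elt a => 1 ≤ k ∧ k ≤ d ∧ a ∈ Tl d ∧ a.length = k
  | _, _ => False

/-- The vertex set of `G_d`. -/
def VSet (d : ℕ) : Finset Vtx :=
  (pathList d).toFinset ∪ (Finset.Icc 1 d).image Vtx.ctr

def GdAdj (d : ℕ) (x y : Vtx) : Prop :=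
  x ≠ y ∧ (ChainAdj (pathList d) x y ∨ ctrAdj d x y ∨ ctrAdj d y x)

/-- The graph `G_d`. -/
def Gd (d : ℕ) : SimpleGraph {x // x ∈ VSet d} where
  Adj x y := GdAdj d x.1 y.1
  symm := by
    constructor
    rintro x y ⟨hne, h⟩
    refine ⟨hne.symm, ?_⟩
    rcases h with ⟨i, hi⟩ | h | h
    · exact Or.inl ⟨i, hi.symm⟩
    · exact Or.inr (Or.inr h)
    · exact Or.inr (Or.inl h)
  loopless := ⟨fun x h => h.1 rfl⟩

/-- A rank decomposition of a graph `G`: a finite cubic tree together with a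
bijection from the vertices of `G` to the leaves of the tree. -/
structure RankDecomp {V : Type} [Fintype V] (G : SimpleGraph V) where
  t : Type
  fin : Fintype t
  tree : SimpleGraph t
  conn : tree.Connected
  acyc : tree.IsAcyclic
  two_le : 2 ≤ Nat.card t
  cubic : ∀ v : t, (tree.neighborSet v).ncard = 1 ∨ (tree.neighborSet v).ncard = 3
  leafEquiv : V ≃ {v : t // (tree.neighborSet v).ncard = 1}

/-- The set of vertices of `G` whose leaf lies on the side of `a` of
the edge `ab` of the decomposition tree. -/
def RankDecomp.side {V : Type} [Fintype V] {G : SimpleGraph V}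
    (D : RankDecomp G) (a b : D.t) : Set V :=
  {x | (D.tree.deleteEdges {s(a, b)}).Reachable (D.leafEquiv x).1 a}

/-- The cutrank function of `G`: the GF(2)-rank of the adjacency submatrix
between `X` and its complement. -/
noncomputable def cutRank {V : Type} [Fintype V] (G : SimpleGraph V) (X : Set V) : ℕ :=
  haveI : Fintype ↥X := Fintype.ofFinite _
  haveI : Fintype ↥(Xᶜ) := Fintype.ofFinite _
  haveI : DecidableRel G.Adj := Classical.decRel _
  Matrix.rank (Matrix.of (fun (x : ↥X) (y : ↥(Xᶜ)) =>
    if G.Adj x.1 y.1 then (1 : ZMod 2) else 0))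

/-- The decomposition `D` has width at most `k`. -/
def RankDecomp.WidthLE {V : Type} [Fintype V] {G : SimpleGraph V}
    (D : RankDecomp G) (k : ℕ) : Prop :=
  ∀ a b : D.t, D.tree.Adj a b → cutRank G (D.side a b) ≤ k

/-- The rank-width of `G`. -/
noncomputable def rankwidth {V : Type} [Fintype V] (G : SimpleGraph V) : ℕ :=
  sInf {k | ∃ D : RankDecomp G, D.WidthLE k}

/-- `l` is an induced path in `G`: its vertices are distinct and two of them
are adjacent in `G` iff they are consecutive on `l`. -/
def IsInducedPathList {V : Type} (G : SimpleGraph V) (l : List V) : Prop :=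
  l.Nodup ∧ ∀ x ∈ l, ∀ y ∈ l, (G.Adj x y ↔ ChainAdj l x y)

/-- The diamond: the complete graph on four vertices minus an edge. -/
def diamond : SimpleGraph (Fin 4) := (⊤ : SimpleGraph (Fin 4)).deleteEdges {s(2, 3)}

namespace SimpleGraph

variable {V : Type*} {G : SimpleGraph V} {a b c d v : V}

def side (G : SimpleGraph V) (a b : V) : Set V :=
  {v | (G.deleteEdges {s(a, b)}).Reachable v a}

def leafSet (G : SimpleGraph V) : Set V := {v | (G.neighborSet v).ncard = 1}

noncomputable def leafCount (G : SimpleGraph V) (a b : V) : ℕ := (G.leafSet ∩ G.side a b).ncard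

lemma mem_side_self : a ∈ G.side a b := Reachable.refl a

lemma side_swap (a b : V) : G.side b a = {v | (G.deleteEdges {s(a, b)}).Reachable v b} := by
  rw [side, Sym2.eq_swap]

lemma mem_side_or_mem_side (h : G.Reachable v a) : v ∈ G.side a b ∨ v ∈ G.side b a := by
  obtain ⟨p⟩ := h
  induction p with
  | nil => exact .inl mem_side_self
  | @cons v u a huv p ih =>
    by_cases he : s(v, u) = s(a, b)
    · rcases Sym2.eq_iff.mp he with ⟨rfl, -⟩ | ⟨rfl, -⟩
      · exact .inl mem_side_self
      · exact .inr mem_side_self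
    · have huv' : (G.deleteEdges {s(a, b)}).Adj v u := by simp [huv, he]
      rcases ih with hu | hu
      · exact .inl (huv'.reachable.trans hu)
      · rw [side_swap a b] at hu ⊢
        exact .inr (huv'.reachable.trans hu)

lemma disjoint_side_side (h : G.IsBridge s(a, b)) : Disjoint (G.side a b) (G.side b a) := by
  rw [side_swap a b, Set.disjoint_left]
  exact fun v hva hvb => h (hva.symm.trans hvb)

lemma side_subset_side (hbr : G.IsBridge s(c, b)) (hcb : G.Adj c b) (hca : c ≠ a) :
    G.side c b ⊆ G.side b a := by
  classical
  intro v hv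
  obtain ⟨q, hq⟩ := reachable_deleteEdges_iff_exists_walk.mp hv
  have hba : s(b, a) ∉ q.edges := fun h => by
    have hb := q.fst_mem_support_of_mem_edges h
    refine hbr (hv.symm.trans (reachable_deleteEdges_iff_exists_walk.mpr
      ⟨q.takeUntil b hb, fun h' => hq (q.edges_takeUntil_subset_edges hb h')⟩))
  have hcb' : (G.deleteEdges {s(b, a)}).Adj c b := by
    simp [hcb, hca, hcb.ne]
  exact (reachable_deleteEdges_iff_exists_walk.mpr ⟨q, hba⟩).trans hcb'.reachable

lemma exists_mem_side_of_mem_side (hv : v ∈ G.side b a) (hvb : v ≠ b) :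
    ∃ c, G.Adj b c ∧ c ≠ a ∧ v ∈ G.side c b := by
  classical
  obtain ⟨p, hp⟩ := reachable_deleteEdges_iff_exists_walk.mp hv
  obtain ⟨c, hbc, q, hq⟩ := p.bypass.reverse.exists_eq_cons_of_ne hvb.symm
  have hpath : (Walk.cons hbc q).IsPath := hq ▸ p.bypass_isPath.reverse
  have hca : c ≠ a := by
    rintro rfl
    refine hp (p.edges_bypass_subset_edges ?_)
    rw [← Walk.reverse_reverse p.bypass, hq]
    simp
  refine ⟨c, hbc, hca, reachable_deleteEdges_iff_exists_walk.mpr ⟨q.reverse, fun h => ?_⟩⟩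
  rw [Walk.edges_reverse, List.mem_reverse] at h
  exact (Walk.cons_isPath_iff _ _).mp hpath |>.2 (q.snd_mem_support_of_mem_edges h)

lemma side_eq_insert_biUnion (hG : G.IsAcyclic) (a b : V) :
    G.side b a = insert b (⋃ c ∈ G.neighborSet b \ {a}, G.side c b) := by
  ext v
  constructor
  · intro hv
    rcases eq_or_ne v b with rfl | hvb
    · exact Set.mem_insert v _
    obtain ⟨c, hbc, hca, hvc⟩ := exists_mem_side_of_mem_side hv hvb
    exact Set.mem_insert_of_mem _ (Set.mem_biUnion ⟨hbc, hca⟩ hvc)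
  · rintro (rfl | hv)
    · exact mem_side_self
    obtain ⟨c, ⟨hbc, hca⟩, hvc⟩ := Set.mem_iUnion₂.mp hv
    exact side_subset_side (isAcyclic_iff_forall_adj_isBridge.mp hG hbc.symm) hbc.symm hca hvc

lemma side_eq_singleton (hG : G.IsAcyclic) (hb : G.neighborSet b ⊆ {a}) : G.side b a = {b} := by
  rw [side_eq_insert_biUnion hG, Set.sdiff_eq_empty.mpr hb, Set.biUnion_empty, insert_empty_eq]

lemma leafCount_eq_one (hG : G.IsAcyclic) (hab : G.Adj a b) (hb : b ∈ G.leafSet) :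
    G.leafCount b a = 1 := by
  obtain ⟨x, hx⟩ := Set.ncard_eq_one.mp hb
  have hxa : a = x := Set.mem_singleton_iff.mp (hx ▸ hab.symm)
  rw [leafCount, side_eq_singleton hG (hx.trans (congrArg _ hxa.symm)).subset,
    Set.inter_eq_right.mpr (Set.singleton_subset_iff.mpr hb), Set.ncard_singleton]

variable [Finite V]

lemma leafCount_add_leafCount (hG : G.Connected) (h : G.IsBridge s(a, b)) :
    G.leafCount a b + G.leafCount b a = G.leafSet.ncard := by
  have hunion : G.side a b ∪ G.side b a = Set.univ :=
    Set.eq_univ_of_forall fun v => mem_side_or_mem_side (hG.preconnected v a)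
  rw [leafCount, leafCount, ← Set.ncard_union_eq
    ((disjoint_side_side h).mono Set.inter_subset_right Set.inter_subset_right),
    ← Set.inter_union_distrib_left, hunion, Set.inter_univ]

lemma leafCount_pos (hG : G.IsAcyclic) (hab : G.Adj a b) : 0 < G.leafCount a b := by
  induction hn : (G.side a b).ncard using Nat.strong_induction_on generalizing a b with
  | _ n ih =>
  by_cases ha : a ∈ G.leafSet
  · exact (Set.ncard_pos (Set.toFinite _)).mpr ⟨a, ha, mem_side_self⟩
  obtain ⟨c, hac, hcb⟩ : ∃ c, G.Adj a c ∧ c ≠ b := by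
    by_contra! h
    exact ha (Set.ncard_eq_one.mpr ⟨b, Set.eq_singleton_iff_unique_mem.mpr ⟨hab, h⟩⟩)
  have hbr := isAcyclic_iff_forall_adj_isBridge.mp hG hac.symm
  have hsub : G.side c a ⊂ G.side a b :=
    (Set.ssubset_iff_of_subset (side_subset_side hbr hac.symm hcb)).mpr
      ⟨a, mem_side_self, Set.disjoint_right.mp (disjoint_side_side hbr) mem_side_self⟩
  calc 0 < G.leafCount c a := ih _ (hn ▸ Set.ncard_lt_ncard hsub) hac.symm rfl
    _ ≤ G.leafCount a b := Set.ncard_le_ncard (Set.inter_subset_inter_right _ hsub.subset)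

lemma leafCount_eq_add (hG : G.IsAcyclic) (hb : b ∉ G.leafSet)
    (hN : G.neighborSet b \ {a} = {c, d}) (hcd : c ≠ d) :
    G.leafCount b a = G.leafCount c b + G.leafCount d b := by
  have hc : c ∈ G.neighborSet b \ {a} := hN ▸ Set.mem_insert c {d}
  have hd : d ∈ G.neighborSet b \ {a} := hN ▸ Set.mem_insert_of_mem c rfl
  have hdisj : Disjoint (G.side c b) (G.side d b) :=
    (disjoint_side_side (isAcyclic_iff_forall_adj_isBridge.mp hG hc.1.symm)).mono_right
      (side_subset_side (isAcyclic_iff_forall_adj_isBridge.mp hG hd.1.symm) hd.1.symm hcd.symm)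
  rw [leafCount, side_eq_insert_biUnion hG, hN, Set.biUnion_pair, Set.inter_insert_of_notMem hb,
    Set.inter_union_distrib_left,
    Set.ncard_union_eq (hdisj.mono Set.inter_subset_right Set.inter_subset_right)]
  rfl

lemma le_three_mul_leafCount_of_forall_max_le (hconn : G.Connected) (hacyc : G.IsAcyclic)
    (hcubic : ∀ v, (G.neighborSet v).ncard = 1 ∨ (G.neighborSet v).ncard = 3) (hab : G.Adj a b)
    (hmin : ∀ c d, G.Adj c d →
      max (G.leafCount a b) (G.leafCount b a) ≤ max (G.leafCount c d) (G.leafCount d c)) :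
    G.leafSet.ncard ≤ 3 * G.leafCount a b := by
  have hbridge : ∀ {x y}, G.Adj x y → G.IsBridge s(x, y) :=
    fun h => isAcyclic_iff_forall_adj_isBridge.mp hacyc h
  have hsum := leafCount_add_leafCount hconn (hbridge hab)
  have hpos := leafCount_pos hacyc hab
  by_contra! hlt
  rcases hcubic b with hb | hb
  · have := leafCount_eq_one hacyc hab hb
    omega
  obtain ⟨c, d, hcd, hN⟩ := Set.ncard_eq_two.mp
    (by rw [Set.ncard_sdiff_singleton_of_mem (G.mem_neighborSet b a |>.mpr hab.symm), hb] :
      (G.neighborSet b \ {a}).ncard = 2)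
  have hsplit := leafCount_eq_add hacyc (show (G.neighborSet b).ncard ≠ 1 by omega) hN hcd
  wlog hdc : G.leafCount d b ≤ G.leafCount c b generalizing c d
  · exact this d c hcd.symm (by rw [hN, Set.pair_comm]) (by omega) (by omega)
  have hcb : G.Adj c b := (hN ▸ Set.mem_insert c {d} : c ∈ G.neighborSet b \ {a}).1.symm
  have hdb : G.Adj d b := (hN ▸ Set.mem_insert_of_mem c rfl : d ∈ G.neighborSet b \ {a}).1.symm
  -- The edge `cb` beats `ab`: its sides carry `leafCount c b < leafCount b a` and
  -- `leafCount a b + leafCount d b < leafCount b a` leaves.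
  have := leafCount_pos hacyc hdb
  have := leafCount_add_leafCount hconn (hbridge hcb)
  have := hmin c b hcb
  omega

end SimpleGraph

/-- Every cubic tree has a balanced edge. -/
theorem stmt1 {t : Type} [Fintype t] (T : SimpleGraph t)
    (hconn : T.Connected) (hacyc : T.IsAcyclic) (h2 : 2 ≤ Fintype.card t)
    (hcubic : ∀ v, (T.neighborSet v).ncard = 1 ∨ (T.neighborSet v).ncard = 3) :
    ∃ a b : t, T.Adj a b ∧
      ({v | (T.neighborSet v).ncard = 1} : Set t).ncard ≤
        3 * ({v | (T.neighborSet v).ncard = 1} ∩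
             {v | (T.deleteEdges {s(a, b)}).Reachable v a}).ncard ∧
      ({v | (T.neighborSet v).ncard = 1} : Set t).ncard ≤
        3 * ({v | (T.neighborSet v).ncard = 1} ∩
             {v | (T.deleteEdges {s(a, b)}).Reachable v b}).ncard := by
  have : Nontrivial t := Fintype.one_lt_card_iff_nontrivial.mp h2
  obtain ⟨y, hxy⟩ := hconn.preconnected.exists_adj_of_nontrivial (Classical.arbitrary t)
  obtain ⟨⟨a, b⟩, hab, hmin⟩ := Set.exists_min_image {e : t × t | T.Adj e.1 e.2}
    (fun e => max (T.leafCount e.1 e.2) (T.leafCount e.2 e.1)) (Set.toFinite _) ⟨(_, y), hxy⟩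
  have hmin' : ∀ c d, T.Adj c d →
      max (T.leafCount a b) (T.leafCount b a) ≤ max (T.leafCount c d) (T.leafCount d c) :=
    fun c d hcd => hmin (c, d) hcd
  refine ⟨a, b, hab, le_three_mul_leafCount_of_forall_max_le hconn hacyc hcubic hab hmin', ?_⟩
  have := le_three_mul_leafCount_of_forall_max_le hconn hacyc hcubic hab.symm
    (fun c d hcd => max_comm (T.leafCount a b) _ ▸ hmin' c d hcd)
  rwa [leafCount, side_swap] at this
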